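/- arXiv:1805.07849 — 5 statements merged into one kernel-verified Lean document; each statement's English description precedes it below -/
import Mathlib

section
/- Let (X_i, Y_i), i = 1, 2, ..., be independent and identically distributed pairs of real-valued random variables on a probability space, with E|X_1| < ∞. Define G_n(t) = (1/n) Σ_{i=1}^n X_i · 1_{Y_i ≤ t} and G(t) = E[X_1 · 1_{Y_1 ≤ t}]. Then sup_{t ∈ ℝ} |G_n(t) − G(t)| → 0 almost surely as n → ∞. -/
/-!
Write `f t (x, y) = x * 1{y ≤ t}` and let `ν D = E[|X₁|; Y₁ ∈ D]`, a finite measure on `ℝ`.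
For `A ⊆ {y ≤ t} ⊆ C`, `f t` lies between `x⁺ 1_A(y) - x⁻ 1_C(y)` and `x⁺ 1_C(y) - x⁻ 1_A(y)`,
two functions whose expectations differ by `ν (C \ A)`. By compactness of `[-∞, ∞]`, finitely many
pairs `(A, C)` with `ν (C \ A) ≤ ε` serve all `t` at once, so the class `{f t}` has finite
`L¹` bracketing numbers. The strong law of large numbers, applied to the countably many brackets
at scales `1 / (k + 1)`, then makes the empirical means converge uniformly in `t`.
-/

open MeasureTheory ProbabilityTheory Filter Set Topology
open scoped ENNReal

theorem tendsto_iSup_abs_sub_of_brackets {E T : Type*} {S : Set (E → ℝ)}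
    {P : ℕ → (E → ℝ) → ℝ} {Q : (E → ℝ) → ℝ} {f : T → E → ℝ}
    (hP : ∀ n, Monotone (P n)) (hQ : MonotoneOn Q S) (hfS : ∀ t, f t ∈ S)
    (hbr : ∀ ε > 0, ∃ B : Finset ((E → ℝ) × (E → ℝ)),
      (∀ b ∈ B, b.1 ∈ S ∧ b.2 ∈ S ∧ Tendsto (P · b.1) atTop (𝓝 (Q b.1)) ∧
        Tendsto (P · b.2) atTop (𝓝 (Q b.2))) ∧
      ∀ t, ∃ b ∈ B, b.1 ≤ f t ∧ f t ≤ b.2 ∧ Q b.2 - Q b.1 ≤ ε) :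
    Tendsto (fun n => ⨆ t, |P n (f t) - Q (f t)|) atTop (𝓝 0) := by
  refine tendsto_order.2 ⟨fun a ha => Eventually.of_forall fun n =>
    ha.trans_le (Real.iSup_nonneg fun _ => abs_nonneg _), fun ε hε => ?_⟩
  obtain ⟨B, hB, hcover⟩ := hbr (ε / 2) (half_pos hε)
  have hclose : ∀ᶠ n in atTop, ∀ b ∈ B,
      |P n b.1 - Q b.1| < ε / 4 ∧ |P n b.2 - Q b.2| < ε / 4 := by
    refine (eventually_all_finset B).2 fun b hb => ?_
    obtain ⟨-, -, h₁, h₂⟩ := hB b hb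
    exact (Metric.tendsto_nhds.1 h₁ _ (by positivity)).and
      (Metric.tendsto_nhds.1 h₂ _ (by positivity))
  filter_upwards [hclose] with n hn
  refine (Real.iSup_le (fun t => ?_) (by positivity)).trans_lt (by linarith : 3 * ε / 4 < ε)
  obtain ⟨b, hb, hl, hu, hw⟩ := hcover t
  obtain ⟨hlS, huS, -, -⟩ := hB b hb
  obtain ⟨hnl, hnu⟩ := hn b hb
  -- `P n l - Q u ≤ P n (f t) - Q (f t) ≤ P n u - Q l`
  have hPl := hP n hl
  have hPu := hP n hu
  have hQl := hQ hlS (hfS t) hl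
  have hQu := hQ (hfS t) huS hu
  rw [abs_lt] at hnl hnu
  rw [abs_le]
  constructor <;> linarith

namespace MeasureTheory

def HasFiniteBrackets {E T : Type*} [MeasurableSpace E] (ρ : Measure E) (f : T → E → ℝ) : Prop :=
  ∀ ε > 0, ∃ B : Finset ((E → ℝ) × (E → ℝ)),
    (∀ b ∈ B, Measurable b.1 ∧ Measurable b.2 ∧ Integrable b.1 ρ ∧ Integrable b.2 ρ) ∧
    ∀ t, ∃ b ∈ B, b.1 ≤ f t ∧ f t ≤ b.2 ∧ ∫ x, b.2 x - b.1 x ∂ρ ≤ ε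

end MeasureTheory

namespace ProbabilityTheory

variable {Ω E : Type*} [MeasurableSpace Ω] [MeasurableSpace E] {μ : Measure Ω} {Z : ℕ → Ω → E}

theorem strong_law_ae_comp (hindep : Pairwise fun i j => IndepFun (Z i) (Z j) μ)
    (hident : ∀ i, IdentDistrib (Z i) (Z 0) μ μ) {g : E → ℝ} (hg : Measurable g)
    (hgi : Integrable g (μ.map (Z 0))) :
    ∀ᵐ ω ∂μ, Tendsto (fun n : ℕ => 1 / (n : ℝ) * ∑ i ∈ Finset.range n, g (Z i ω)) atTop
      (𝓝 (∫ x, g x ∂μ.map (Z 0))) := by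
  have hZ₀ := (hident 0).aemeasurable_fst
  rw [integral_map hZ₀ hgi.aestronglyMeasurable]
  filter_upwards [strong_law_ae_real (fun i => g ∘ Z i) (hgi.comp_aemeasurable hZ₀)
    (fun i j hij => (hindep hij).comp hg hg) fun i => (hident i).comp hg] with ω hω
  simpa [one_div, inv_mul_eq_div] using hω

theorem glivenko_cantelli_of_hasFiniteBrackets {T : Type*}
    (hindep : Pairwise fun i j => IndepFun (Z i) (Z j) μ)
    (hident : ∀ i, IdentDistrib (Z i) (Z 0) μ μ) {f : T → E → ℝ}
    (hf : ∀ t, Integrable (f t) (μ.map (Z 0))) (hbr : HasFiniteBrackets (μ.map (Z 0)) f) :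
    ∀ᵐ ω ∂μ, Tendsto (fun n : ℕ => ⨆ t,
      |1 / (n : ℝ) * ∑ i ∈ Finset.range n, f t (Z i ω) - ∫ ω', f t (Z 0 ω') ∂μ|) atTop (𝓝 0) := by
  set ρ := μ.map (Z 0)
  choose B hB hcover using fun k : ℕ => hbr (1 / (k + 1)) Nat.one_div_pos_of_nat
  have hslln : ∀ᵐ ω ∂μ, ∀ k, ∀ b ∈ B k,
      Tendsto (fun n : ℕ => 1 / (n : ℝ) * ∑ i ∈ Finset.range n, b.1 (Z i ω)) atTop
        (𝓝 (∫ x, b.1 x ∂ρ)) ∧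
      Tendsto (fun n : ℕ => 1 / (n : ℝ) * ∑ i ∈ Finset.range n, b.2 (Z i ω)) atTop
        (𝓝 (∫ x, b.2 x ∂ρ)) := by
    refine ae_all_iff.2 fun k => (eventually_all_finset _).2 fun b hb => ?_
    obtain ⟨h₁, h₂, hi₁, hi₂⟩ := hB k b hb
    exact (strong_law_ae_comp hindep hident h₁ hi₁).and
      (strong_law_ae_comp hindep hident h₂ hi₂)
  filter_upwards [hslln] with ω hω
  have hQ (t : T) : ∫ ω', f t (Z 0 ω') ∂μ = ∫ x, f t x ∂ρ :=
    (integral_map (hident 0).aemeasurable_fst (hf t).aestronglyMeasurable).symm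
  simp_rw [hQ]
  refine tendsto_iSup_abs_sub_of_brackets (S := {g | Integrable g ρ})
    (P := fun n g => 1 / (n : ℝ) * ∑ i ∈ Finset.range n, g (Z i ω)) (Q := fun g => ∫ x, g x ∂ρ)
    (fun n g h hgh => ?_) (fun g hg h hh hgh => integral_mono hg hh hgh) hf fun ε hε => ?_
  · exact mul_le_mul_of_nonneg_left (Finset.sum_le_sum fun i _ => hgh _) (by positivity)
  obtain ⟨k, hk⟩ := exists_nat_one_div_lt hε
  refine ⟨B k, fun b hb => ⟨(hB k b hb).2.2.1, (hB k b hb).2.2.2, hω k b hb⟩, fun t => ?_⟩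
  obtain ⟨b, hb, hl, hu, hw⟩ := hcover k t
  refine ⟨b, hb, hl, hu, ?_⟩
  rw [← integral_sub (hB k b hb).2.2.2 (hB k b hb).2.2.1]
  exact hw.trans hk.le

end ProbabilityTheory

namespace MeasureTheory

section FiniteMeasureOnReal

variable (ν : Measure ℝ) [IsFiniteMeasure ν] {ε : ℝ≥0∞}

lemma exists_measure_Iio_le (hε : 0 < ε) : ∃ u : ℝ, ν (Iio u) ≤ ε := by
  have h := tendsto_measure_iInter_atBot (μ := ν) (fun u : ℝ => measurableSet_Iio.nullMeasurableSet)
    (fun _ _ => Iio_subset_Iio) ⟨0, measure_ne_top _ _⟩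
  rw [show ⋂ u : ℝ, Iio u = ∅ from iInter_eq_empty_iff.2 fun y => ⟨y, lt_irrefl y⟩,
    measure_empty] at h
  exact (h.eventually (ge_mem_nhds hε)).exists

lemma exists_measure_Ioi_le (hε : 0 < ε) : ∃ s : ℝ, ν (Ioi s) ≤ ε := by
  have h := tendsto_measure_iInter_atTop (μ := ν) (fun s : ℝ => measurableSet_Ioi.nullMeasurableSet)
    (fun _ _ => Ioi_subset_Ioi) ⟨0, measure_ne_top _ _⟩
  rw [show ⋂ s : ℝ, Ioi s = ∅ from iInter_eq_empty_iff.2 fun y => ⟨y, lt_irrefl y⟩,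
    measure_empty] at h
  exact (h.eventually (ge_mem_nhds hε)).exists

lemma exists_measure_Ioo_le (t : ℝ) (hε : 0 < ε) :
    ∃ s < t, ∃ u > t, ν (Ioo s t) ≤ ε ∧ ν (Ioo t u) ≤ ε := by
  -- the punctured intervals `(2t - r, r) \ {t}` shrink to `∅` as `r ↓ t`
  have h := tendsto_measure_biInter_gt (μ := ν) (a := t) (s := fun r => Ioo (2 * t - r) r \ {t})
    (fun _ _ => (measurableSet_Ioo.diff (measurableSet_singleton t)).nullMeasurableSet)
    (fun i j _ hij => sdiff_subset_sdiff_left (Ioo_subset_Ioo (by linarith) hij))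
    ⟨t + 1, by linarith, measure_ne_top _ _⟩
  have hempty : ⋂ r > t, Ioo (2 * t - r) r \ {t} = ∅ := by
    refine eq_empty_of_forall_notMem fun y hy => ?_
    simp only [mem_iInter, Set.mem_sdiff, mem_Ioo, mem_singleton_iff] at hy
    have hyt : 0 < |y - t| := abs_pos.2 (sub_ne_zero.2 (hy (t + 1) (by linarith)).2)
    obtain ⟨⟨h₁, h₂⟩, -⟩ := hy (t + |y - t|) (by linarith)
    exact lt_irrefl _ (abs_lt.2 ⟨by linarith, by linarith⟩ : |y - t| < |y - t|)
  rw [hempty, measure_empty] at h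
  obtain ⟨r, hrε, hrt⟩ := ((h.eventually (ge_mem_nhds hε)).and self_mem_nhdsWithin).exists
  refine ⟨2 * t - r, by linarith [hrt], r, hrt, le_trans (measure_mono ?_) hrε,
    le_trans (measure_mono ?_) hrε⟩
  · exact fun y hy => ⟨⟨hy.1, hy.2.trans hrt⟩, hy.2.ne⟩
  · exact fun y hy => ⟨⟨by linarith [hy.1, hrt], hy.2⟩, hy.1.ne'⟩

theorem exists_finset_brackets_Iic (hε : 0 < ε) :
    ∃ B : Finset (Set ℝ × Set ℝ),
      (∀ b ∈ B, MeasurableSet b.1 ∧ MeasurableSet b.2 ∧ ν (b.2 \ b.1) ≤ ε) ∧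
      ∀ t, ∃ b ∈ B, b.1 ⊆ Iic t ∧ Iic t ⊆ b.2 := by
  classical
  -- compactness of `[-∞, ∞]`: every point has a neighbourhood covered by two small brackets
  let Good (U : Set EReal) : Prop := ∃ B : Finset (Set ℝ × Set ℝ),
    (∀ b ∈ B, MeasurableSet b.1 ∧ MeasurableSet b.2 ∧ ν (b.2 \ b.1) ≤ ε) ∧
      ∀ t : ℝ, (t : EReal) ∈ U → ∃ b ∈ B, b.1 ⊆ Iic t ∧ Iic t ⊆ b.2
  suffices Good univ by simpa [Good] using this
  refine isCompact_univ.induction_on ⟨∅, by simp, by simp⟩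
    (fun U V hUV ⟨B, hB, hV⟩ => ⟨B, hB, fun t ht => hV t (hUV ht)⟩)
    (fun U V ⟨B, hB, hU⟩ ⟨C, hC, hV⟩ => ⟨B ∪ C, ?_, ?_⟩) fun x _ => ?_
  · exact Finset.forall_mem_union.2 ⟨hB, hC⟩
  · rintro t (ht | ht)
    · obtain ⟨b, hb, h⟩ := hU t ht
      exact ⟨b, Finset.mem_union_left _ hb, h⟩
    · obtain ⟨b, hb, h⟩ := hV t ht
      exact ⟨b, Finset.mem_union_right _ hb, h⟩
  rw [nhdsWithin_univ]
  induction x using EReal.rec with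
  | bot =>
    obtain ⟨u, hu⟩ := exists_measure_Iio_le ν hε
    refine ⟨Iio (u : EReal), Iio_mem_nhds (EReal.bot_lt_coe u), {(∅, Iio u)}, by simpa using hu,
      fun t ht => ⟨_, Finset.mem_singleton_self _, empty_subset _,
        Iic_subset_Iio.2 (EReal.coe_lt_coe_iff.1 ht)⟩⟩
  | top =>
    obtain ⟨s, hs⟩ := exists_measure_Ioi_le ν hε
    refine ⟨Ioi (s : EReal), Ioi_mem_nhds (EReal.coe_lt_top s), {(Iic s, univ)}, ?_,
      fun t ht => ⟨_, Finset.mem_singleton_self _, Iic_subset_Iic.2 (EReal.coe_lt_coe_iff.1 ht).le,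
        subset_univ _⟩⟩
    simpa [← compl_eq_univ_sdiff] using hs
  | coe t =>
    obtain ⟨s, hst, u, hut, hs, hu⟩ := exists_measure_Ioo_le ν t hε
    refine ⟨Ioo (s : EReal) u,
      Ioo_mem_nhds (EReal.coe_lt_coe_iff.2 hst) (EReal.coe_lt_coe_iff.2 hut),
      {(Iic s, Iio t), (Iic t, Iio u)}, ?_, fun r hr => ?_⟩
    · simp only [Finset.mem_insert, Finset.mem_singleton, forall_eq_or_imp, forall_eq]
      exact ⟨⟨measurableSet_Iic, measurableSet_Iio, by rwa [Iio_sdiff_Iic]⟩,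
        measurableSet_Iic, measurableSet_Iio, by rwa [Iio_sdiff_Iic]⟩
    obtain ⟨hsr, hru⟩ := hr
    rcases lt_or_ge r t with hrt | htr
    · exact ⟨_, Finset.mem_insert_self _ _, Iic_subset_Iic.2 (EReal.coe_lt_coe_iff.1 hsr).le,
        Iic_subset_Iio.2 hrt⟩
    · exact ⟨_, Finset.mem_insert_of_mem (Finset.mem_singleton_self _), Iic_subset_Iic.2 htr,
        Iic_subset_Iio.2 (EReal.coe_lt_coe_iff.1 hru)⟩

end FiniteMeasureOnReal

end MeasureTheory

section PosNegIndicator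

variable {α : Type*} (g : α → ℝ) {A A' C C' : Set α}

/-- For `A ⊆ S ⊆ C`, the pair `(posNegIndicator g A C, posNegIndicator g C A)` brackets
`S.indicator g`. -/
noncomputable def posNegIndicator (A C : Set α) : α → ℝ :=
  A.indicator (fun x => (g x)⁺) - C.indicator (fun x => (g x)⁻)

lemma posNegIndicator_self (S : Set α) : posNegIndicator g S S = S.indicator g := by
  ext x
  by_cases hx : x ∈ S <;> simp [posNegIndicator, hx]

lemma posNegIndicator_mono (hA : A ⊆ A') (hC : C' ⊆ C) :
    posNegIndicator g A C ≤ posNegIndicator g A' C' := fun x =>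
  sub_le_sub (indicator_le_indicator_of_subset hA (fun _ => posPart_nonneg _) x)
    (indicator_le_indicator_of_subset hC (fun _ => negPart_nonneg _) x)

lemma posNegIndicator_sub_posNegIndicator (hAC : A ⊆ C) :
    posNegIndicator g C A - posNegIndicator g A C = (C \ A).indicator fun x => |g x| := by
  ext x
  by_cases hA : x ∈ A
  · simp [posNegIndicator, hA, hAC hA]
  by_cases hC : x ∈ C <;> simp [posNegIndicator, hA, hC, ← posPart_add_negPart]

variable {g} [MeasurableSpace α]

lemma Measurable.posNegIndicator (hg : Measurable g) (hA : MeasurableSet A) (hC : MeasurableSet C) :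
    Measurable (posNegIndicator g A C) :=
  ((hg.max measurable_const).indicator hA).sub ((hg.neg.max measurable_const).indicator hC)

lemma MeasureTheory.Integrable.posNegIndicator {μ : Measure α} (hg : Integrable g μ)
    (hA : MeasurableSet A) (hC : MeasurableSet C) : Integrable (posNegIndicator g A C) μ :=
  (hg.pos_part.indicator hA).sub (hg.neg_part.indicator hC)

end PosNegIndicator

namespace MeasureTheory

lemma ite_snd_le_eq_indicator (t : ℝ) :
    (fun p : ℝ × ℝ => if p.2 ≤ t then p.1 else 0) = (Prod.snd ⁻¹' Iic t).indicator Prod.fst := by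
  ext p
  by_cases h : p.2 ≤ t <;> simp [h]

lemma integrable_ite_snd_le {ρ : Measure (ℝ × ℝ)} (h : Integrable Prod.fst ρ) (t : ℝ) :
    Integrable (fun p : ℝ × ℝ => if p.2 ≤ t then p.1 else 0) ρ := by
  rw [ite_snd_le_eq_indicator]
  exact h.indicator (measurable_snd measurableSet_Iic)

theorem hasFiniteBrackets_ite_snd_le {ρ : Measure (ℝ × ℝ)} (h : Integrable Prod.fst ρ) :
    HasFiniteBrackets ρ (fun t p => if p.2 ≤ t then p.1 else 0) := by
  classical
  intro ε hε
  let ν : Measure ℝ := (ρ.withDensity fun p => ENNReal.ofReal |p.1|).map Prod.snd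
  have : IsFiniteMeasure ν := by
    have := isFiniteMeasure_withDensity_ofReal h.abs.hasFiniteIntegral
    infer_instance
  have hν : ∀ D, MeasurableSet D →
      ∫ p, (Prod.snd ⁻¹' D).indicator (fun p => |p.1|) p ∂ρ = (ν D).toReal := by
    intro D hD
    rw [integral_indicator (measurable_snd hD), integral_eq_lintegral_of_nonneg_ae
      (ae_of_all _ fun _ => abs_nonneg _) h.abs.aestronglyMeasurable.restrict,
      Measure.map_apply measurable_snd hD, withDensity_apply _ (measurable_snd hD)]
  obtain ⟨B, hB, hcover⟩ := exists_finset_brackets_Iic ν (ENNReal.ofReal_pos.2 hε)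
  let bracket (b : Set ℝ × Set ℝ) : (ℝ × ℝ → ℝ) × (ℝ × ℝ → ℝ) :=
    (posNegIndicator Prod.fst (Prod.snd ⁻¹' b.1) (Prod.snd ⁻¹' b.2),
      posNegIndicator Prod.fst (Prod.snd ⁻¹' b.2) (Prod.snd ⁻¹' b.1))
  refine ⟨B.image bracket, Finset.forall_mem_image.2 fun b hb => ?_, fun t => ?_⟩
  · obtain ⟨h₁, h₂, -⟩ := hB b hb
    exact ⟨measurable_fst.posNegIndicator (measurable_snd h₁) (measurable_snd h₂),
      measurable_fst.posNegIndicator (measurable_snd h₂) (measurable_snd h₁),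
      h.posNegIndicator (measurable_snd h₁) (measurable_snd h₂),
      h.posNegIndicator (measurable_snd h₂) (measurable_snd h₁)⟩
  obtain ⟨b, hb, hA, hC⟩ := hcover t
  obtain ⟨h₁, h₂, hbε⟩ := hB b hb
  have hf := (posNegIndicator_self Prod.fst (Prod.snd ⁻¹' Iic t)).trans
    (ite_snd_le_eq_indicator t).symm
  refine ⟨bracket b, Finset.mem_image_of_mem _ hb, ?_, ?_, ?_⟩
  · beta_reduce
    exact hf ▸ posNegIndicator_mono _ (preimage_mono hA) (preimage_mono hC)
  · beta_reduce
    exact hf ▸ posNegIndicator_mono _ (preimage_mono hC) (preimage_mono hA)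
  calc ∫ p, (bracket b).2 p - (bracket b).1 p ∂ρ
      = ∫ p, (Prod.snd ⁻¹' (b.2 \ b.1)).indicator (fun p => |p.1|) p ∂ρ := by
        rw [preimage_sdiff, ← posNegIndicator_sub_posNegIndicator _ (preimage_mono (hA.trans hC))]
        rfl
    _ = (ν (b.2 \ b.1)).toReal := hν _ (h₂.diff h₁)
    _ ≤ ε := ENNReal.toReal_le_of_le_ofReal hε.le hbε

end MeasureTheory

theorem weighted_glivenko_cantelli_general
    {Ω : Type*} [MeasurableSpace Ω] (μ : Measure Ω)
    (X Y : ℕ → Ω → ℝ)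
    (hindep : iIndepFun (fun i ω => (X i ω, Y i ω)) μ)
    (hident : ∀ i, IdentDistrib (fun ω => (X i ω, Y i ω)) (fun ω => (X 0 ω, Y 0 ω)) μ μ)
    (hint : Integrable (X 0) μ) :
    ∀ᵐ ω ∂μ, Tendsto (fun n : ℕ =>
        ⨆ t : ℝ,
          |(1 / (n : ℝ)) * ∑ i ∈ Finset.range n, (if Y i ω ≤ t then X i ω else 0)
            - ∫ ω', (if Y 0 ω' ≤ t then X 0 ω' else 0) ∂μ|)
      atTop (nhds 0) := by
  have hfst : Integrable Prod.fst (μ.map fun ω => (X 0 ω, Y 0 ω)) :=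
    (integrable_map_measure measurable_fst.aestronglyMeasurable (hident 0).aemeasurable_fst).2 hint
  exact (glivenko_cantelli_of_hasFiniteBrackets (fun i j hij => hindep.indepFun hij) hident
    (integrable_ite_snd_le hfst) (hasFiniteBrackets_ite_snd_le hfst) :)

/-- Weighted Glivenko–Cantelli theorem: for i.i.d. pairs `(Xᵢ, Yᵢ)` with `E|X₁| < ∞`,
`sup_t |(1/n) ∑ Xᵢ 1_{Yᵢ ≤ t} − E[X₁ 1_{Y₁ ≤ t}]| → 0` almost surely. -/
theorem weighted_glivenko_cantelli
    {Ω : Type*} [MeasurableSpace Ω] (μ : Measure Ω) [IsProbabilityMeasure μ]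
    (X Y : ℕ → Ω → ℝ)
    (hmeas : ∀ i, Measurable (fun ω => (X i ω, Y i ω)))
    (hindep : iIndepFun (fun i ω => (X i ω, Y i ω)) μ)
    (hident : ∀ i, IdentDistrib (fun ω => (X i ω, Y i ω)) (fun ω => (X 0 ω, Y 0 ω)) μ μ)
    (hint : Integrable (X 0) μ) :
    ∀ᵐ ω ∂μ, Tendsto (fun n : ℕ =>
        ⨆ t : ℝ,
          |(1 / (n : ℝ)) * ∑ i ∈ Finset.range n, (if Y i ω ≤ t then X i ω else 0)
            - ∫ ω', (if Y 0 ω' ≤ t then X 0 ω' else 0) ∂μ|)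
      atTop (nhds 0) :=
  weighted_glivenko_cantelli_general μ X Y hindep hident hint
end

section
/- Let X_e, X_I be bounded real random variables and X_o a bounded ℝ^d-valued random variable on a probability space. Set Δ = X_e − E(X_e | X_I, X_o) and X_u = ρ₀Δ + ε, where ρ₀ ∈ ℝ and ε is a real random variable independent of (X_e, X_I, X_o) such that L(t) = E[exp(−εt)] is finite, strictly positive, and differentiable in t on [0, ∞). Let λ₀ : [0, ∞) → ℝ be continuous, β_e ∈ ℝ, β_o ∈ ℝ^d, and suppose the conditional survival function given (X_e, X_I, X_o, X_u) is S(t | X_e, X_I, X_o, X_u) = exp(−∫₀ᵗ λ₀(s) ds − (β_e X_e + β_oᵀ X_o + X_u) t). Then, defining S(t | X_e, X_I, X_o) = E[S(t | X_e, X_I, X_o, X_u) | X_e, X_I, X_o], there is a version of these conditional expectations such that almost surely, for every t > 0, −(∂/∂t) log S(t | X_e, X_I, X_o) = λ̄₀(t) + β_e X_e + β_oᵀ X_o + ρ₀Δ, where λ̄₀(t) = λ₀(t) − (d/dt) log L(t). -/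
open MeasureTheory ProbabilityTheory Filter Set Real
open scoped ENNReal

/-!
Given the observed covariates `(Xₑ, X_I, Xₒ)`, the residual `Δ` is known while `ε` is independent
of them, so `S(t | ·) = exp(-Λ₀(t) - A t) · exp(-ε t)` with `A = βₑXₑ + βₒᵀXₒ + ρ₀Δ` bounded and
observed-measurable. Pulling out the known factor and replacing the conditional expectation of the
independent one by its mean gives `S̄(t) = exp(-Λ₀(t) - A t) · L(t)`, and
`-(log S̄)'(t) = λ₀(t) - L'(t)/L(t) + A`.
-/

section EssentiallyBounded

variable {Ω : Type*} {m₀ : MeasurableSpace Ω} {μ : Measure Ω}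

lemma MeasureTheory.MemLp.exists_ae_norm_le {E : Type*} [NormedAddCommGroup E] {f : Ω → E}
    (hf : MemLp f ∞ μ) : ∃ C, ∀ᵐ ω ∂μ, ‖f ω‖ ≤ C := by
  refine ⟨(eLpNormEssSup f μ).toReal, ?_⟩
  have hfin : eLpNormEssSup f μ ≠ ∞ := by
    simpa [eLpNorm_exponent_top] using hf.eLpNorm_ne_top
  filter_upwards [ae_le_eLpNormEssSup (f := f) (μ := μ)] with ω hω
  rw [← toReal_enorm (f ω)]
  exact ENNReal.toReal_mono hfin hω

lemma memLp_top_exp_sub_mul {A : Ω → ℝ} (hA : MemLp A ∞ μ) (c t : ℝ) :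
    MemLp (fun ω => exp (c - A ω * t)) ∞ μ := by
  obtain ⟨C, hC⟩ := hA.exists_ae_norm_le
  refine memLp_top_of_bound ?_ (exp (|c| + C * |t|)) ?_
  · exact continuous_exp.comp_aestronglyMeasurable
      (aestronglyMeasurable_const.sub (hA.1.mul_const t))
  filter_upwards [hC] with ω hω
  rw [norm_eq_abs, abs_exp, exp_le_exp]
  calc c - A ω * t ≤ |c| + |A ω| * |t| := by
        rw [← abs_mul]; linarith [le_abs_self c, neg_abs_le (A ω * t)]
    _ ≤ |c| + C * |t| := by gcongr; exact hω

lemma memLp_top_sum_mul {ι : Type*} [Fintype ι] {X : Ω → ι → ℝ} (hX : Measurable X)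
    (hX_bdd : ∃ C, ∀ ω i, |X ω i| ≤ C) (β : ι → ℝ) :
    MemLp (fun ω => ∑ i, β i * X ω i) ∞ μ := by
  obtain ⟨C, hC⟩ := hX_bdd
  refine memLp_finsetSum _ fun i _ => MemLp.const_mul ?_ (β i)
  exact memLp_top_of_bound ((measurable_pi_apply i).comp hX).aestronglyMeasurable C
    (ae_of_all _ fun ω => hC ω i)

end EssentiallyBounded

section Independence

variable {Ω : Type*} {m mg m₀ : MeasurableSpace Ω} {μ : Measure Ω} [IsFiniteMeasure μ]

theorem condExp_mul_eq_mul_integral_of_indep (hm : m ≤ m₀) (hmg : mg ≤ m₀)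
    (hindep : Indep mg m μ) {f g : Ω → ℝ} (hf : StronglyMeasurable[m] f) (hf_top : MemLp f ∞ μ)
    (hg : StronglyMeasurable[mg] g) (hg_int : Integrable g μ) :
    μ[f * g | m] =ᵐ[μ] fun ω => f ω * μ[g] := by
  filter_upwards [condExp_mul_of_stronglyMeasurable_left hf (hg_int.mul_of_top_right hf_top)
    hg_int, condExp_indep_eq hmg hm hg hindep] with ω hfg hg
  rw [hfg, Pi.mul_apply, hg]

theorem condExp_exp_sub_add_mul_of_indep (hm : m ≤ m₀)
    {A ε : Ω → ℝ} (hA : StronglyMeasurable[m] A) (hA_top : MemLp A ∞ μ) (hε : Measurable ε)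
    (hindep : Indep (MeasurableSpace.comap ε inferInstance) m μ) (c t : ℝ)
    (hint : Integrable (fun ω => exp (-(ε ω * t))) μ) :
    μ[fun ω => exp (c - (A ω + ε ω) * t) | m]
      =ᵐ[μ] fun ω => exp (c - A ω * t) * ∫ ω, exp (-(ε ω * t)) ∂μ := by
  have hfactor : (fun ω => exp (c - (A ω + ε ω) * t))
      = (fun ω => exp (c - A ω * t)) * fun ω => exp (-(ε ω * t)) := by
    funext ω
    rw [Pi.mul_apply, ← exp_add]
    congr 1
    ring
  rw [hfactor]
  refine condExp_mul_eq_mul_integral_of_indep hm hε.comap_le hindep ?_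
    (memLp_top_exp_sub_mul hA_top c t) ?_ hint
  · exact continuous_exp.comp_stronglyMeasurable
      (stronglyMeasurable_const.sub (hA.mul stronglyMeasurable_const))
  · exact (continuous_exp.measurable.comp
      ((comap_measurable ε).mul_const t).neg).stronglyMeasurable

end Independence

theorem hasDerivAt_intervalIntegral_of_continuousOn_Ici {f : ℝ → ℝ} {a t : ℝ}
    (hf : ContinuousOn f (Ici a)) (ht : a < t) :
    HasDerivAt (fun s => ∫ u in a..s, f u) (f t) t := by
  refine intervalIntegral.integral_hasDerivAt_right ?_ ?_ (hf.continuousAt (Ici_mem_nhds ht))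
  · exact (hf.mono (by rw [uIcc_of_le ht.le]; exact Icc_subset_Ici_self)).intervalIntegrable
  · exact (hf.mono Ioi_subset_Ici_self).stronglyMeasurableAtFilter isOpen_Ioi t ht

theorem HasDerivAt.log_exp_mul {u L : ℝ → ℝ} {u' L' t : ℝ} (hu : HasDerivAt u u' t)
    (hL : HasDerivAt L L' t) (hLt : L t ≠ 0) :
    HasDerivAt (fun s => Real.log (Real.exp (u s) * L s)) (u' + L' / L t) t := by
  refine ((hu.exp.mul hL).log (mul_ne_zero (Real.exp_ne_zero _) hLt)).congr_deriv ?_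
  change (_ * _ + _) / (Real.exp (u t) * L t) = _
  field_simp

theorem additive_hazards_collapsible_general
    {Ω : Type*} {m0 : MeasurableSpace Ω} (μ : Measure Ω) [IsProbabilityMeasure μ]
    {d : ℕ}
    (Xe XI : Ω → ℝ) (Xo : Ω → Fin d → ℝ) (ε : Ω → ℝ)
    (hXe : Measurable Xe) (hXI : Measurable XI) (hXo : Measurable Xo) (hε : Measurable ε)
    (hXe_bdd : ∃ C : ℝ, ∀ ω, |Xe ω| ≤ C)
    (hXo_bdd : ∃ C : ℝ, ∀ ω j, |Xo ω j| ≤ C)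
    (ρ₀ : ℝ)
    (hindep : IndepFun ε (fun ω => (Xe ω, XI ω, Xo ω)) μ)
    (m : MeasurableSpace Ω)
    (hm : m = MeasurableSpace.comap (fun ω => (XI ω, Xo ω)) inferInstance)
    (Δ : Ω → ℝ) (hΔ : Δ = fun ω => Xe ω - (μ[Xe | m]) ω)
    (Xu : Ω → ℝ) (hXu : Xu = fun ω => ρ₀ * Δ ω + ε ω)
    (L : ℝ → ℝ) (hLdef : ∀ t : ℝ, L t = ∫ ω, Real.exp (-(ε ω * t)) ∂μ)
    (hLint : ∀ t : ℝ, 0 ≤ t → Integrable (fun ω => Real.exp (-(ε ω * t))) μ)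
    (hLpos : ∀ t : ℝ, 0 ≤ t → 0 < L t)
    (L' : ℝ → ℝ) (hL' : ∀ t : ℝ, 0 ≤ t → HasDerivWithinAt L (L' t) (Set.Ici 0) t)
    (lam : ℝ → ℝ) (hlam : ContinuousOn lam (Set.Ici 0))
    (βe : ℝ) (βo : Fin d → ℝ)
    (S : ℝ → Ω → ℝ)
    (hS : ∀ t ω, S t ω = Real.exp (-(∫ s in (0:ℝ)..t, lam s)
      - (βe * Xe ω + (∑ j, βo j * Xo ω j) + Xu ω) * t))
    (mObs : MeasurableSpace Ω)
    (hmObs : mObs = MeasurableSpace.comap (fun ω => (Xe ω, XI ω, Xo ω)) inferInstance) :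
    ∃ Sbar : ℝ → Ω → ℝ,
      (∀ t : ℝ, 0 ≤ t → Sbar t =ᵐ[μ] μ[S t | mObs]) ∧
      (∀ᵐ ω ∂μ, ∀ t : ℝ, 0 < t →
        HasDerivAt (fun s => Real.log (Sbar s ω))
          (-((lam t - L' t / L t) + βe * Xe ω + (∑ j, βo j * Xo ω j) + ρ₀ * Δ ω)) t) := by
  obtain ⟨Ce, hCe⟩ := hXe_bdd
  have hmObs_le : mObs ≤ m0 := hmObs ▸ (hXe.prodMk (hXI.prodMk hXo)).comap_le
  have htriple : Measurable[mObs] fun ω => (Xe ω, XI ω, Xo ω) := hmObs ▸ comap_measurable _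
  have hm_le : m ≤ mObs := hm ▸ (measurable_snd.comp htriple).comap_le
  have hΔ_meas : Measurable[mObs] Δ := hΔ ▸
    (measurable_fst.comp htriple).sub (stronglyMeasurable_condExp.mono hm_le).measurable
  set A : Ω → ℝ := fun ω => βe * Xe ω + (∑ j, βo j * Xo ω j) + ρ₀ * Δ ω with hA
  have hA_meas : StronglyMeasurable[mObs] A := by
    have hXo_meas : Measurable[mObs] Xo := (measurable_snd.comp measurable_snd).comp htriple
    have hXe_meas : Measurable[mObs] Xe := measurable_fst.comp htriple
    exact Measurable.stronglyMeasurable (by fun_prop)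
  have hXe_top : MemLp Xe ∞ μ := memLp_top_of_bound hXe.aestronglyMeasurable Ce (ae_of_all _ hCe)
  have hA_top : MemLp A ∞ μ := ((hXe_top.const_mul βe).add (memLp_top_sum_mul hXo hXo_bdd βo)).add
    (hΔ ▸ (hXe_top.sub (hXe_top.condExp le_top)).const_mul ρ₀)
  have hindep_obs : Indep (MeasurableSpace.comap ε inferInstance) mObs μ :=
    hmObs ▸ (IndepFun_iff_Indep _ _ _).mp hindep
  refine ⟨fun t ω => Real.exp (-(∫ s in (0:ℝ)..t, lam s) - A ω * t) * L t, fun t ht => ?_,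
    ae_of_all _ fun ω t ht => ?_⟩
  · have hSt : S t = fun ω => Real.exp (-(∫ s in (0:ℝ)..t, lam s) - (A ω + ε ω) * t) := by
      funext ω
      rw [hS, hXu, hA]
      congr 1
      ring
    simp only [hSt, hLdef]
    exact (condExp_exp_sub_add_mul_of_indep hmObs_le hA_meas hA_top hε hindep_obs _ t
      (hLint t ht)).symm
  · refine (((hasDerivAt_intervalIntegral_of_continuousOn_Ici hlam ht).neg.sub
      ((hasDerivAt_id t).const_mul (A ω))).log_exp_mul
      ((hL' t ht.le).hasDerivAt (Ici_mem_nhds ht)) (hLpos t ht.le).ne').congr_deriv ?_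
    rw [hA]
    ring

/-- Collapsibility of the additive hazards model: integrating out the unobserved confounder
`X_u = ρ₀Δ + ε` from the conditional survival function
`S(t | X_e, X_I, X_o, X_u) = exp(−∫₀ᵗ λ₀ − (βₑXₑ + βₒᵀXₒ + X_u)t)`, there is a version `S̄` of
the conditional expectations `E[S(t|·) | X_e, X_I, X_o]` such that almost surely, for every
`t > 0`, `−(∂/∂t) log S̄(t) = λ₀(t) − L'(t)/L(t) + βₑXₑ + βₒᵀXₒ + ρ₀Δ`,
where `L(t) = E[exp(−εt)]` and `Δ = Xₑ − E(Xₑ | X_I, Xₒ)`. -/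
theorem additive_hazards_collapsible
    {Ω : Type*} {m0 : MeasurableSpace Ω} (μ : Measure Ω) [IsProbabilityMeasure μ]
    {d : ℕ}
    (Xe XI : Ω → ℝ) (Xo : Ω → Fin d → ℝ) (ε : Ω → ℝ)
    (hXe : Measurable Xe) (hXI : Measurable XI) (hXo : Measurable Xo) (hε : Measurable ε)
    (hXe_bdd : ∃ C : ℝ, ∀ ω, |Xe ω| ≤ C) (hXI_bdd : ∃ C : ℝ, ∀ ω, |XI ω| ≤ C)
    (hXo_bdd : ∃ C : ℝ, ∀ ω j, |Xo ω j| ≤ C)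
    (ρ₀ : ℝ)
    (hindep : IndepFun ε (fun ω => (Xe ω, XI ω, Xo ω)) μ)
    (m : MeasurableSpace Ω)
    (hm : m = MeasurableSpace.comap (fun ω => (XI ω, Xo ω)) inferInstance)
    (Δ : Ω → ℝ) (hΔ : Δ = fun ω => Xe ω - (μ[Xe | m]) ω)
    (Xu : Ω → ℝ) (hXu : Xu = fun ω => ρ₀ * Δ ω + ε ω)
    (L : ℝ → ℝ) (hLdef : ∀ t : ℝ, L t = ∫ ω, Real.exp (-(ε ω * t)) ∂μ)
    (hLint : ∀ t : ℝ, 0 ≤ t → Integrable (fun ω => Real.exp (-(ε ω * t))) μ)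
    (hLpos : ∀ t : ℝ, 0 ≤ t → 0 < L t)
    (L' : ℝ → ℝ) (hL' : ∀ t : ℝ, 0 ≤ t → HasDerivWithinAt L (L' t) (Set.Ici 0) t)
    (lam : ℝ → ℝ) (hlam : ContinuousOn lam (Set.Ici 0))
    (βe : ℝ) (βo : Fin d → ℝ)
    (S : ℝ → Ω → ℝ)
    (hS : ∀ t ω, S t ω = Real.exp (-(∫ s in (0:ℝ)..t, lam s)
      - (βe * Xe ω + (∑ j, βo j * Xo ω j) + Xu ω) * t))
    (mObs : MeasurableSpace Ω)
    (hmObs : mObs = MeasurableSpace.comap (fun ω => (Xe ω, XI ω, Xo ω)) inferInstance) :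
    ∃ Sbar : ℝ → Ω → ℝ,
      (∀ t : ℝ, 0 ≤ t → Sbar t =ᵐ[μ] μ[S t | mObs]) ∧
      (∀ᵐ ω ∂μ, ∀ t : ℝ, 0 < t →
        HasDerivAt (fun s => Real.log (Sbar s ω))
          (-((lam t - L' t / L t) + βe * Xe ω + (∑ j, βo j * Xo ω j) + ρ₀ * Δ ω)) t) :=
  additive_hazards_collapsible_general (m0 := m0) μ Xe XI Xo ε hXe hXI hXo hε hXe_bdd hXo_bdd ρ₀
    hindep m hm Δ hΔ Xu hXu L hLdef hLint hLpos L' hL' lam hlam βe βo S hS mObs hmObs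
end

section
/- Let (F_t)_{t ∈ [0,1]} be a filtration on a probability space and M = (M(t))_{t ∈ [0,1]} a martingale with respect to (F_t) with E[M(t)²] < ∞ for every t. For each t ∈ [0,1], let w(t) be a square-integrable random variable such that E[w(t) | F_t] = G(t) almost surely, where G : [0,1] → ℝ is a deterministic function. Then for all 0 ≤ s ≤ t ≤ 1, E[w(t)(M(t) − M(s)) | F_s] = 0 almost surely. -/
/-!
Condition on `F_t` first: the increment `M(t) - M(s)` is `F_t`-measurable, so it can be pulled
out of `E[w(t) (M(t) - M(s)) | F_t]`, leaving `G(t) (M(t) - M(s))`. The tower property then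
reduces the claim to `G(t) E[M(t) - M(s) | F_s] = 0`, which is the martingale property.
-/

open MeasureTheory ProbabilityTheory

theorem MeasureTheory.Martingale.condExp_sub_ae_eq_zero {Ω E ι : Type*} [Preorder ι]
    {m0 : MeasurableSpace Ω} {μ : Measure Ω} [NormedAddCommGroup E] [NormedSpace ℝ E]
    [CompleteSpace E] {ℱ : Filtration ι m0} {f : ι → Ω → E} (hf : Martingale f ℱ μ)
    {i j : ι} (hij : i ≤ j) :
    μ[f j - f i | ℱ i] =ᵐ[μ] 0 := by
  filter_upwards [condExp_sub (hf.integrable j) (hf.integrable i) (ℱ i),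
    hf.condExp_ae_eq hij, hf.condExp_ae_eq le_rfl] with ω hsub hj hi
  rw [hsub, Pi.sub_apply, hj, hi, Pi.zero_apply, sub_self]

theorem MeasureTheory.condExp_mul_ae_eq_smul_condExp_of_condExp_ae_eq_const {Ω : Type*}
    {m m' m0 : MeasurableSpace Ω} {μ : Measure Ω} (hmm' : m ≤ m') (hm' : m' ≤ m0)
    [SigmaFinite (μ.trim hm')] {g f : Ω → ℝ} {c : ℝ} (hf : AEStronglyMeasurable[m'] f μ)
    (hgf : Integrable (g * f) μ) (hg : Integrable g μ) (hgc : μ[g | m'] =ᵐ[μ] fun _ => c) :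
    μ[g * f | m] =ᵐ[μ] c • μ[f | m] := by
  have hinner : μ[g * f | m'] =ᵐ[μ] c • f := by
    filter_upwards [condExp_mul_of_aestronglyMeasurable_right hf hgf hg, hgc] with ω hpull hc
    rw [hpull, Pi.mul_apply, hc, Pi.smul_apply, smul_eq_mul]
  calc μ[g * f | m] =ᵐ[μ] μ[μ[g * f | m'] | m] := (condExp_condExp_of_le hmm' hm').symm
    _ =ᵐ[μ] μ[c • f | m] := condExp_congr_ae hinner
    _ =ᵐ[μ] c • μ[f | m] := condExp_smul c f m

/-- If `M` is a square-integrable martingale on `[0,1]` and, for each `t`, `w(t)` is a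
square-integrable random variable (not necessarily adapted) with `E[w(t) | F_t] = G(t)` a.s.
for a deterministic function `G`, then `E[w(t)(M(t) − M(s)) | F_s] = 0` a.s. for `s ≤ t`. -/
theorem condexp_weight_martingale_increment
    {Ω : Type*} {m0 : MeasurableSpace Ω} (μ : Measure Ω) [IsProbabilityMeasure μ]
    (ℱ : Filtration (Set.Icc (0:ℝ) 1) m0)
    (M : Set.Icc (0:ℝ) 1 → Ω → ℝ)
    (hM : Martingale M ℱ μ)
    (hM2 : ∀ t : Set.Icc (0:ℝ) 1, MemLp (M t) 2 μ)
    (w : Set.Icc (0:ℝ) 1 → Ω → ℝ) (G : Set.Icc (0:ℝ) 1 → ℝ)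
    (hw2 : ∀ t : Set.Icc (0:ℝ) 1, MemLp (w t) 2 μ)
    (hwG : ∀ t : Set.Icc (0:ℝ) 1, μ[w t | ℱ t] =ᵐ[μ] fun _ => G t) :
    ∀ s t : Set.Icc (0:ℝ) 1, s ≤ t →
      μ[fun ω => w t ω * (M t ω - M s ω) | ℱ s] =ᵐ[μ] 0 := by
  intro s t hst
  have hincrement : StronglyMeasurable[ℱ t] (M t - M s) :=
    (hM.stronglyAdapted t).sub ((hM.stronglyAdapted s).mono (ℱ.mono hst))
  calc μ[w t * (M t - M s) | ℱ s]
      =ᵐ[μ] G t • μ[M t - M s | ℱ s] :=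
        condExp_mul_ae_eq_smul_condExp_of_condExp_ae_eq_const (ℱ.mono hst) (ℱ.le t)
          hincrement.aestronglyMeasurable ((hw2 t).integrable_mul ((hM2 t).sub (hM2 s)))
          ((hw2 t).integrable one_le_two) (hwG t)
    _ =ᵐ[μ] 0 := by simpa using (hM.condExp_sub_ae_eq_zero hst).const_smul (G t)
end

section
/- Let C and T be real-valued random variables and W a random element of a measurable space, defined on a common probability space, such that C is independent of the pair (T, W). Let G(u) = P(C ≥ u), fix t ≥ 0, and assume G(min(T, t)) > 0 almost surely. Then E[1_{C ≥ min(T,t)} / G(min(T, t)) | σ(T, W)] = 1 almost surely, and consequently E[1_{C ≥ min(T,t)} · G(t) / G(min(T, t)) | σ(T, W)] = G(t) almost surely. -/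
/-! Since `C` is independent of `(T, W)`, conditioning on `(T, W)` freezes `u = min(T, t)` and
integrates `C` out against its law. The indicator `1_{C ≥ u}` then integrates to `P(C ≥ u) = G(u)`,
which cancels the denominator wherever `G(u) > 0`. The second identity is the first multiplied by
the constant `G(t)`. -/

open MeasureTheory ProbabilityTheory

section Freezing

variable {Ω β γ : Type*} {mΩ : MeasurableSpace Ω} {mβ : MeasurableSpace β} {mγ : MeasurableSpace γ}
  {μ : Measure Ω} [IsProbabilityMeasure μ] {Y : Ω → β} {X : Ω → γ}

lemma integrable_comp_prodMk_iff_of_indepFun {F : Type*} [NormedAddCommGroup F]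
    (hY : Measurable Y) (hX : Measurable X) (hindep : IndepFun Y X μ) {f : β × γ → F}
    (hf : AEStronglyMeasurable f ((μ.map Y).prod (μ.map X))) :
    Integrable (fun ω => f (Y ω, X ω)) μ ↔ Integrable f ((μ.map Y).prod (μ.map X)) := by
  rw [← (indepFun_iff_map_prod_eq_prod_map_map hY.aemeasurable hX.aemeasurable).1 hindep] at hf ⊢
  exact (integrable_map_measure hf (hY.prodMk hX).aemeasurable).symm

lemma condExp_comp_prodMk_ae_eq_integral_of_indepFun [StandardBorelSpace γ] [Nonempty γ]
    {F : Type*} [NormedAddCommGroup F] [NormedSpace ℝ F] [CompleteSpace F]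
    (hY : Measurable Y) (hX : Measurable X) (hindep : IndepFun Y X μ) {f : β × γ → F}
    (hf : StronglyMeasurable f) (hf_int : Integrable (fun ω => f (Y ω, X ω)) μ) :
    μ[fun ω => f (Y ω, X ω) | mβ.comap Y] =ᵐ[μ] fun ω => ∫ x, f (Y ω, x) ∂(μ.map X) := by
  have hκ : condDistrib X Y μ =ᵐ[μ.map Y] Kernel.const β (μ.map X) := by
    rw [condDistrib_ae_eq_iff_measure_eq_compProd Y hX.aemeasurable, Measure.compProd_const]
    exact (indepFun_iff_map_prod_eq_prod_map_map hY.aemeasurable hX.aemeasurable).1 hindep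
  filter_upwards [condExp_prod_ae_eq_integral_condDistrib hY hX.aemeasurable hf hf_int,
    ae_of_ae_map hY.aemeasurable hκ] with ω hω hκω
  rw [hω, hκω, Kernel.const_apply]

end Freezing

lemma integral_indicator_one_div_measureReal {α : Type*} [MeasurableSpace α] (κ : Measure α)
    [IsFiniteMeasure κ] {s : Set α} (hs : MeasurableSet s) (hκs : κ.real s ≠ 0) :
    ∫ a, s.indicator 1 a / κ.real s ∂κ = 1 := by
  rw [integral_div, integral_indicator_one hs, div_self hκs]

section Survival

variable {Ω : Type*} {mΩ : MeasurableSpace Ω} {μ : Measure Ω} {X : Ω → ℝ} {G : ℝ → ℝ}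

lemma survival_eq_measureReal_map (hX : Measurable X)
    (hG : ∀ u : ℝ, G u = (μ {ω | u ≤ X ω}).toReal) (u : ℝ) :
    G u = (μ.map X).real (Set.Ici u) := by
  rw [hG, measureReal_def, Measure.map_apply hX measurableSet_Ici]
  rfl

lemma measurable_survival [IsFiniteMeasure μ] (hX : Measurable X)
    (hG : ∀ u : ℝ, G u = (μ {ω | u ≤ X ω}).toReal) : Measurable G := by
  refine Antitone.measurable fun a b hab => ?_
  simp only [survival_eq_measureReal_map hX hG]
  exact measureReal_mono (Set.Ici_subset_Ici.mpr hab)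

theorem condExp_indicator_div_survival_ae_eq_one {β : Type*} {mβ : MeasurableSpace β}
    [IsProbabilityMeasure μ] {Y : Ω → β} (hX : Measurable X) (hY : Measurable Y)
    (hindep : IndepFun X Y μ) (hG : ∀ u : ℝ, G u = (μ {ω | u ≤ X ω}).toReal)
    {u : β → ℝ} (hu : Measurable u) (hpos : ∀ᵐ ω ∂μ, 0 < G (u (Y ω))) :
    μ[fun ω => (if u (Y ω) ≤ X ω then (1:ℝ) else 0) / G (u (Y ω)) | mβ.comap Y]
      =ᵐ[μ] fun _ => 1 := by
  set f : β × ℝ → ℝ := fun p => (Set.Ici (u p.1)).indicator 1 p.2 / G (u p.1)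
  have hf_eq (y : β) (x : ℝ) : f (y, x) = (if u y ≤ x then (1:ℝ) else 0) / G (u y) := by
    simp only [f, Set.indicator_apply, Set.mem_Ici, Pi.one_apply]
  have hGm := measurable_survival hX hG
  have hf : Measurable f :=
    (measurable_const.indicator (measurableSet_le (hu.comp measurable_fst) measurable_snd)).div
      (hGm.comp (hu.comp measurable_fst))
  have hinner (y : β) (hy : 0 < G (u y)) : ∫ x, f (y, x) ∂(μ.map X) = 1 := by
    rw [survival_eq_measureReal_map hX hG] at hy
    change ∫ x, (Set.Ici (u y)).indicator 1 x / G (u y) ∂(μ.map X) = 1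
    rw [survival_eq_measureReal_map hX hG]
    exact integral_indicator_one_div_measureReal _ measurableSet_Ici hy.ne'
  have hpos_map : ∀ᵐ y ∂(μ.map Y), 0 < G (u y) :=
    (ae_map_iff hY.aemeasurable (measurableSet_lt measurable_const (hGm.comp hu))).2 hpos
  have hf_int : Integrable (fun ω => f (Y ω, X ω)) μ := by
    rw [integrable_comp_prodMk_iff_of_indepFun hY hX hindep.symm hf.aestronglyMeasurable,
      integrable_prod_iff hf.aestronglyMeasurable]
    have hsection (y : β) : Integrable (fun x => f (y, x)) (μ.map X) := by
      have hindicator : Integrable ((Set.Ici (u y)).indicator fun _ => (1:ℝ)) (μ.map X) :=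
        (integrable_const 1).indicator measurableSet_Ici
      exact hindicator.div_const (G (u y))
    refine ⟨.of_forall hsection, (integrable_const (1:ℝ)).congr ?_⟩
    filter_upwards [hpos_map] with y hy
    have hf_nonneg (x : ℝ) : 0 ≤ f (y, x) :=
      div_nonneg (Set.indicator_nonneg (fun _ _ => zero_le_one) _) hy.le
    simp only [Real.norm_of_nonneg (hf_nonneg _), hinner y hy]
  simp only [← hf_eq]
  filter_upwards [condExp_comp_prodMk_ae_eq_integral_of_indepFun hY hX hindep.symm
    hf.stronglyMeasurable hf_int, ae_of_ae_map hY.aemeasurable hpos_map] with ω hω hωpos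
  rw [hω, hinner _ hωpos]

end Survival

theorem ipcw_conditional_expectation_general
    {Ω E : Type*} {m0 : MeasurableSpace Ω} [MeasurableSpace E]
    (μ : Measure Ω) [IsProbabilityMeasure μ]
    (C T : Ω → ℝ) (W : Ω → E)
    (hC : Measurable C) (hT : Measurable T) (hW : Measurable W)
    (hindep : IndepFun C (fun ω => (T ω, W ω)) μ)
    (G : ℝ → ℝ) (hG : ∀ u : ℝ, G u = (μ {ω | u ≤ C ω}).toReal)
    (t : ℝ)
    (hpos : ∀ᵐ ω ∂μ, 0 < G (min (T ω) t)) :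
    (μ[fun ω => (if min (T ω) t ≤ C ω then (1:ℝ) else 0) / G (min (T ω) t)
          | MeasurableSpace.comap (fun ω => (T ω, W ω)) inferInstance]
        =ᵐ[μ] fun _ => 1) ∧
    (μ[fun ω => (if min (T ω) t ≤ C ω then (1:ℝ) else 0) * G t / G (min (T ω) t)
          | MeasurableSpace.comap (fun ω => (T ω, W ω)) inferInstance]
        =ᵐ[μ] fun _ => G t) := by
  have hone := condExp_indicator_div_survival_ae_eq_one hC (hT.prodMk hW) hindep hG
    (u := fun y : ℝ × E => min y.1 t) (measurable_fst.min measurable_const) hpos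
  refine ⟨hone, ?_⟩
  have hsmul : (fun ω => (if min (T ω) t ≤ C ω then (1:ℝ) else 0) * G t / G (min (T ω) t)) =
      G t • fun ω => (if min (T ω) t ≤ C ω then (1:ℝ) else 0) / G (min (T ω) t) := by
    ext ω
    simp only [Pi.smul_apply, smul_eq_mul]
    ring
  rw [hsmul]
  filter_upwards [condExp_smul (μ := μ) (G t)
    (fun ω => (if min (T ω) t ≤ C ω then (1:ℝ) else 0) / G (min (T ω) t)) _, hone]
    with ω hsmul_ω hone_ω
  rw [hsmul_ω, Pi.smul_apply, hone_ω, smul_eq_mul, mul_one]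

/-- Inverse-probability-of-censoring-weighting identity: if `C` is independent of `(T, W)`,
`G(u) = P(C ≥ u)`, `t ≥ 0` and `G(min(T,t)) > 0` a.s., then
`E[1_{C ≥ min(T,t)} / G(min(T,t)) | σ(T,W)] = 1` a.s., and consequently
`E[1_{C ≥ min(T,t)} · G(t) / G(min(T,t)) | σ(T,W)] = G(t)` a.s. -/
theorem ipcw_conditional_expectation
    {Ω E : Type*} {m0 : MeasurableSpace Ω} [MeasurableSpace E]
    (μ : Measure Ω) [IsProbabilityMeasure μ]
    (C T : Ω → ℝ) (W : Ω → E)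
    (hC : Measurable C) (hT : Measurable T) (hW : Measurable W)
    (hindep : IndepFun C (fun ω => (T ω, W ω)) μ)
    (G : ℝ → ℝ) (hG : ∀ u : ℝ, G u = (μ {ω | u ≤ C ω}).toReal)
    (t : ℝ) (ht : 0 ≤ t)
    (hpos : ∀ᵐ ω ∂μ, 0 < G (min (T ω) t)) :
    (μ[fun ω => (if min (T ω) t ≤ C ω then (1:ℝ) else 0) / G (min (T ω) t)
          | MeasurableSpace.comap (fun ω => (T ω, W ω)) inferInstance]
        =ᵐ[μ] fun _ => 1) ∧
    (μ[fun ω => (if min (T ω) t ≤ C ω then (1:ℝ) else 0) * G t / G (min (T ω) t)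
          | MeasurableSpace.comap (fun ω => (T ω, W ω)) inferInstance]
        =ᵐ[μ] fun _ => G t) :=
  ipcw_conditional_expectation_general (m0 := m0) μ C T W hC hT hW hindep G hG t hpos
end

section
/- Let C and T be real-valued random variables and J, Z random elements of measurable spaces, defined on a common probability space, such that C is independent of (T, J, Z). Let G(u) = P(C ≥ u), fix t ≥ 0, assume G(min(T, t)) > 0 almost surely, and define the censoring weight w(t) = 1_{C ≥ min(T,t)} · G(t) / G(min(T, t)). Then for every bounded measurable real-valued function f of (T, J, Z): (i) E[w(t) · f(T, J, Z)] = E[1_{C ≥ t} · f(T, J, Z)] = G(t) · E[f(T, J, Z)], and (ii) E[w(t) · f(T, J, Z) | σ(Z)] = E[1_{C ≥ t} · f(T, J, Z) | σ(Z)] almost surely. -/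
/-!
Integrating out the censoring time `C` first, which is allowed because `C` is independent of
`V = (T, J, Z)`, turns `1{τ(V) ≤ C}` into `G(τ(V))`. For `τ = min(T, t)` this cancels the
denominator of the weight, and for `τ = t` it leaves the constant `G(t)`; so on every event
`{V ∈ S}` both sides equal `G(t) E[f(V); V ∈ S]`. The `σ(Z)`-events are of this form, which gives
the conditional statement.
-/

open MeasureTheory ProbabilityTheory

section

variable {Ω β : Type*} {m0 : MeasurableSpace Ω} [MeasurableSpace β] {μ : Measure Ω}

lemma antitone_of_eq_survival [IsFiniteMeasure μ] {C : Ω → ℝ} {G : ℝ → ℝ}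
    (hG : ∀ u, G u = (μ {ω | u ≤ C ω}).toReal) : Antitone G := fun a b hab => by
  rw [hG a, hG b]
  exact ENNReal.toReal_mono (measure_ne_top μ _) (measure_mono fun ω h => hab.trans h)

lemma abs_div_survival_min_le_one [IsFiniteMeasure μ] {C : Ω → ℝ} {G : ℝ → ℝ}
    (hG : ∀ u, G u = (μ {ω | u ≤ C ω}).toReal) (s t : ℝ) : |G t / G (min s t)| ≤ 1 := by
  have hGnonneg : ∀ u, 0 ≤ G u := fun u => (hG u).symm ▸ ENNReal.toReal_nonneg
  rw [abs_of_nonneg (div_nonneg (hGnonneg _) (hGnonneg _))]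
  exact div_le_one_of_le₀ (antitone_of_eq_survival hG (min_le_right s t)) (hGnonneg _)

lemma MeasureTheory.Integrable.const_mul_div_survival_min [IsFiniteMeasure μ] {C T g : Ω → ℝ}
    {G : ℝ → ℝ} (hg : Integrable g μ) (hG : ∀ u, G u = (μ {ω | u ≤ C ω}).toReal)
    (hT : Measurable T) (t : ℝ) : Integrable (fun ω => G t * g ω / G (min (T ω) t)) μ := by
  have hratio : Measurable fun ω => G t / G (min (T ω) t) :=
    ((antitone_of_eq_survival hG).measurable.comp (hT.min measurable_const)).const_div _
  simp only [mul_div_right_comm (G t)]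
  exact hg.bdd_mul hratio.aestronglyMeasurable
    (ae_of_all _ fun ω => abs_div_survival_min_le_one hG _ _)

lemma integral_map_ite_le (C : Ω → ℝ) (hC : Measurable C) (u : ℝ) :
    ∫ c, (if u ≤ c then (1 : ℝ) else 0) ∂(μ.map C) = (μ {ω | u ≤ C ω}).toReal := by
  have h : (fun c : ℝ => if u ≤ c then (1 : ℝ) else 0) = (Set.Ici u).indicator 1 := by
    ext c; simp [Set.indicator_apply]
  rw [h, integral_indicator_one measurableSet_Ici, map_measureReal_apply hC measurableSet_Ici]
  rfl

lemma MeasureTheory.Integrable.ite_le_mul {a b g : Ω → ℝ} (ha : Measurable a) (hb : Measurable b)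
    (hg : Integrable g μ) : Integrable (fun ω => (if a ω ≤ b ω then (1 : ℝ) else 0) * g ω) μ :=
  hg.bdd_mul (c := 1)
    (Measurable.ite (measurableSet_le ha hb) measurable_const measurable_const).aestronglyMeasurable
    (ae_of_all _ fun ω => by split_ifs <;> simp)

lemma integral_ite_le_mul_eq_integral_survival_mul [IsFiniteMeasure μ]
    {V : Ω → β} {C : Ω → ℝ} (hV : Measurable V) (hC : Measurable C) (hindep : IndepFun C V μ)
    {G : ℝ → ℝ} (hG : ∀ u, G u = (μ {ω | u ≤ C ω}).toReal)
    {τ h : β → ℝ} (hτ : Measurable τ) (hh : Measurable h) (hint : Integrable (h ∘ V) μ) :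
    ∫ ω, (if τ (V ω) ≤ C ω then (1 : ℝ) else 0) * h (V ω) ∂μ
      = ∫ ω, G (τ (V ω)) * h (V ω) ∂μ := by
  set F : β × ℝ → ℝ := fun p => (if τ p.1 ≤ p.2 then (1 : ℝ) else 0) * h p.1
  have hF : Measurable F :=
    (Measurable.ite (measurableSet_le (hτ.comp measurable_fst) measurable_snd)
      measurable_const measurable_const).mul (hh.comp measurable_fst)
  have hVC : Measurable fun ω => (V ω, C ω) := hV.prodMk hC
  -- Independence makes the law of `(V, C)` a product, so Fubini integrates out `C` first.
  have hmap : μ.map (fun ω => (V ω, C ω)) = (μ.map V).prod (μ.map C) :=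
    (indepFun_iff_map_prod_eq_prod_map_map hV.aemeasurable hC.aemeasurable).mp hindep.symm
  have hFint : Integrable F ((μ.map V).prod (μ.map C)) := by
    refine (((integrable_map_measure hh.aestronglyMeasurable hV.aemeasurable).mpr hint).comp_fst
      _).mono hF.aestronglyMeasurable (ae_of_all _ fun p => ?_)
    simp only [F, norm_mul]
    split_ifs <;> simp
  calc ∫ ω, (if τ (V ω) ≤ C ω then (1 : ℝ) else 0) * h (V ω) ∂μ
      = ∫ p, F p ∂(μ.map fun ω => (V ω, C ω)) :=
        (integral_map hVC.aemeasurable hF.aestronglyMeasurable).symm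
    _ = ∫ v, ∫ c, F (v, c) ∂(μ.map C) ∂(μ.map V) := by rw [hmap, integral_prod F hFint]
    _ = ∫ v, G (τ v) * h v ∂(μ.map V) := by
        simp only [F, integral_mul_const, integral_map_ite_le C hC, hG]
    _ = ∫ ω, G (τ (V ω)) * h (V ω) ∂μ := by
        rw [integral_map hV.aemeasurable]
        exact ((antitone_of_eq_survival hG).measurable.comp hτ).mul hh |>.aestronglyMeasurable

lemma setIntegral_preimage_ite_le_mul_eq_setIntegral_survival_mul [IsFiniteMeasure μ]
    {V : Ω → β} {C : Ω → ℝ} (hV : Measurable V) (hC : Measurable C) (hindep : IndepFun C V μ)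
    {G : ℝ → ℝ} (hG : ∀ u, G u = (μ {ω | u ≤ C ω}).toReal)
    {τ h : β → ℝ} (hτ : Measurable τ) (hh : Measurable h) (hint : Integrable (h ∘ V) μ)
    {S : Set β} (hS : MeasurableSet S) :
    ∫ ω in V ⁻¹' S, (if τ (V ω) ≤ C ω then (1 : ℝ) else 0) * h (V ω) ∂μ
      = ∫ ω in V ⁻¹' S, G (τ (V ω)) * h (V ω) ∂μ := by
  have hcomp : ∀ ω, (V ⁻¹' S).indicator (h ∘ V) ω = S.indicator h (V ω) :=
    fun _ => Set.indicator_comp_right V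
  have hint' : Integrable (S.indicator h ∘ V) μ := by
    simpa only [Function.comp_def, ← hcomp] using hint.indicator (hV hS)
  simp only [← integral_indicator (hV hS), Set.indicator_mul_right]
  simp only [← Function.comp_apply (f := h) (g := V), hcomp]
  exact integral_ite_le_mul_eq_integral_survival_mul hV hC hindep hG hτ (hh.indicator hS) hint'

lemma setIntegral_preimage_ite_le_mul_div_survival [IsFiniteMeasure μ]
    {V : Ω → β} {C : Ω → ℝ} (hV : Measurable V) (hC : Measurable C) (hindep : IndepFun C V μ)
    {G : ℝ → ℝ} (hG : ∀ u, G u = (μ {ω | u ≤ C ω}).toReal)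
    {τ h : β → ℝ} (hτ : Measurable τ) (hh : Measurable h) (hpos : ∀ᵐ ω ∂μ, 0 < G (τ (V ω)))
    (hint : Integrable (fun ω => h (V ω) / G (τ (V ω))) μ) {S : Set β} (hS : MeasurableSet S) :
    ∫ ω in V ⁻¹' S, (if τ (V ω) ≤ C ω then (1 : ℝ) else 0) * (h (V ω) / G (τ (V ω))) ∂μ
      = ∫ ω in V ⁻¹' S, h (V ω) ∂μ := by
  have hquot : Measurable fun v => h v / G (τ v) :=
    hh.div ((antitone_of_eq_survival hG).measurable.comp hτ)
  rw [setIntegral_preimage_ite_le_mul_eq_setIntegral_survival_mul (h := fun v => h v / G (τ v))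
    hV hC hindep hG hτ hquot hint hS]
  refine integral_congr_ae (ae_restrict_of_ae ?_)
  filter_upwards [hpos] with ω hω
  exact mul_div_cancel₀ _ hω.ne'

lemma condExp_ae_eq_of_forall_setIntegral_eq {m : MeasurableSpace Ω} (hm : m ≤ m0)
    [SigmaFinite (μ.trim hm)] {X Y : Ω → ℝ} (hX : Integrable X μ) (hY : Integrable Y μ)
    (hXY : ∀ s, MeasurableSet[m] s → ∫ ω in s, X ω ∂μ = ∫ ω in s, Y ω ∂μ) :
    μ[X | m] =ᵐ[μ] μ[Y | m] :=
  ae_eq_condExp_of_forall_setIntegral_eq hm hY (fun _ _ _ => integrable_condExp.integrableOn)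
    (fun s hs _ => (setIntegral_condExp hm hX hs).trans (hXY s hs))
    stronglyMeasurable_condExp.aestronglyMeasurable

end

theorem ipcw_weight_replacement_general
    {Ω E₁ E₂ : Type*} {m0 : MeasurableSpace Ω} [MeasurableSpace E₁] [MeasurableSpace E₂]
    (μ : Measure Ω) [IsProbabilityMeasure μ]
    (C T : Ω → ℝ) (J : Ω → E₁) (Z : Ω → E₂)
    (hC : Measurable C) (hT : Measurable T) (hJ : Measurable J) (hZ : Measurable Z)
    (hindep : IndepFun C (fun ω => (T ω, J ω, Z ω)) μ)
    (G : ℝ → ℝ) (hG : ∀ u : ℝ, G u = (μ {ω | u ≤ C ω}).toReal)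
    (t : ℝ)
    (hpos : ∀ᵐ ω ∂μ, 0 < G (min (T ω) t))
    (w : Ω → ℝ)
    (hw : w = fun ω => (if min (T ω) t ≤ C ω then (1:ℝ) else 0) * G t / G (min (T ω) t)) :
    ∀ f : ℝ × E₁ × E₂ → ℝ, Measurable f → (∃ Cb : ℝ, ∀ x, |f x| ≤ Cb) →
      ((∫ ω, w ω * f (T ω, J ω, Z ω) ∂μ
          = ∫ ω, (if t ≤ C ω then (1:ℝ) else 0) * f (T ω, J ω, Z ω) ∂μ) ∧
       (∫ ω, w ω * f (T ω, J ω, Z ω) ∂μ = G t * ∫ ω, f (T ω, J ω, Z ω) ∂μ) ∧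
       (μ[fun ω => w ω * f (T ω, J ω, Z ω)
            | MeasurableSpace.comap Z inferInstance]
          =ᵐ[μ] μ[fun ω => (if t ≤ C ω then (1:ℝ) else 0) * f (T ω, J ω, Z ω)
            | MeasurableSpace.comap Z inferInstance])) := by
  rintro f hf ⟨Cb, hCb⟩
  set V : Ω → ℝ × E₁ × E₂ := fun ω => (T ω, J ω, Z ω)
  have hV : Measurable V := hT.prodMk (hJ.prodMk hZ)
  have hfint : Integrable (f ∘ V) μ :=
    .of_bound (hf.comp hV).aestronglyMeasurable Cb (ae_of_all _ fun ω => hCb (V ω))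
  have hquot : Integrable (fun ω => G t * f (V ω) / G (min (T ω) t)) μ :=
    hfint.const_mul_div_survival_min hG hT t
  have hw' : ∀ ω, w ω * f (V ω)
      = (if min (T ω) t ≤ C ω then (1:ℝ) else 0) * (G t * f (V ω) / G (min (T ω) t)) := by
    intro ω; rw [hw]; ring
  have hweighted : ∀ S, MeasurableSet S →
      ∫ ω in V ⁻¹' S, w ω * f (V ω) ∂μ = G t * ∫ ω in V ⁻¹' S, f (V ω) ∂μ := fun S hS => by
    simp only [hw', ← integral_const_mul]
    exact setIntegral_preimage_ite_le_mul_div_survival (τ := fun v => min v.1 t)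
      (h := fun v => G t * f v) hV hC hindep hG (measurable_fst.min measurable_const)
      (hf.const_mul _) hpos hquot hS
  have hcomplete : ∀ S, MeasurableSet S →
      ∫ ω in V ⁻¹' S, (if t ≤ C ω then (1:ℝ) else 0) * f (V ω) ∂μ
        = G t * ∫ ω in V ⁻¹' S, f (V ω) ∂μ := fun S hS => by
    rw [setIntegral_preimage_ite_le_mul_eq_setIntegral_survival_mul (τ := fun _ => t)
      hV hC hindep hG measurable_const hf hfint hS, integral_const_mul]
  refine ⟨?_, ?_, ?_⟩
  · simpa using (hweighted _ .univ).trans (hcomplete _ .univ).symm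
  · simpa using hweighted _ .univ
  · refine condExp_ae_eq_of_forall_setIntegral_eq hZ.comap_le ?_
      (hfint.ite_le_mul measurable_const hC) ?_
    · exact (hquot.ite_le_mul (hT.min measurable_const) hC).congr
        (ae_of_all _ fun ω => (hw' ω).symm)
    · rintro _ ⟨B, hB, rfl⟩
      have hS : MeasurableSet {v : ℝ × E₁ × E₂ | v.2.2 ∈ B} := measurable_snd.snd hB
      exact (hweighted _ hS).trans (hcomplete _ hS).symm

/-- The inverse-probability-of-censoring weight `w(t) = 1_{C ≥ min(T,t)} G(t)/G(min(T,t))`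
can be replaced, in expectation and conditionally on `Z`, by the censoring-complete
indicator `1_{C ≥ t}`: for every bounded measurable `f`,
`E[w(t) f(T,J,Z)] = E[1_{C ≥ t} f(T,J,Z)] = G(t) E[f(T,J,Z)]` and
`E[w(t) f(T,J,Z) | σ(Z)] = E[1_{C ≥ t} f(T,J,Z) | σ(Z)]` a.s. -/
theorem ipcw_weight_replacement
    {Ω E₁ E₂ : Type*} {m0 : MeasurableSpace Ω} [MeasurableSpace E₁] [MeasurableSpace E₂]
    (μ : Measure Ω) [IsProbabilityMeasure μ]
    (C T : Ω → ℝ) (J : Ω → E₁) (Z : Ω → E₂)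
    (hC : Measurable C) (hT : Measurable T) (hJ : Measurable J) (hZ : Measurable Z)
    (hindep : IndepFun C (fun ω => (T ω, J ω, Z ω)) μ)
    (G : ℝ → ℝ) (hG : ∀ u : ℝ, G u = (μ {ω | u ≤ C ω}).toReal)
    (t : ℝ) (ht : 0 ≤ t)
    (hpos : ∀ᵐ ω ∂μ, 0 < G (min (T ω) t))
    (w : Ω → ℝ)
    (hw : w = fun ω => (if min (T ω) t ≤ C ω then (1:ℝ) else 0) * G t / G (min (T ω) t)) :
    ∀ f : ℝ × E₁ × E₂ → ℝ, Measurable f → (∃ Cb : ℝ, ∀ x, |f x| ≤ Cb) →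
      ((∫ ω, w ω * f (T ω, J ω, Z ω) ∂μ
          = ∫ ω, (if t ≤ C ω then (1:ℝ) else 0) * f (T ω, J ω, Z ω) ∂μ) ∧
       (∫ ω, w ω * f (T ω, J ω, Z ω) ∂μ = G t * ∫ ω, f (T ω, J ω, Z ω) ∂μ) ∧
       (μ[fun ω => w ω * f (T ω, J ω, Z ω)
            | MeasurableSpace.comap Z inferInstance]
          =ᵐ[μ] μ[fun ω => (if t ≤ C ω then (1:ℝ) else 0) * f (T ω, J ω, Z ω)
            | MeasurableSpace.comap Z inferInstance])) :=
  ipcw_weight_replacement_general (m0 := m0) μ C T J Z hC hT hJ hZ hindep G hG t hpos w hw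
end
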